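/- Let m be an even positive integer and let 𝒞 be the order m dimension n symmetric Cauchy tensor with generating vector c ∈ ℝ^n. Then 𝒞 is not positive semi-definite if and only if there exists an index i ∈ {1,…,n} with c_i < 0. -/

import Mathlib

/-!
If every `cᵢ > 0`, writing `1 / s = ∫₀¹ t ^ (s - 1) dt` turns `𝒞 x^m` into
`∫₀¹ (∑ᵢ xᵢ t ^ (cᵢ - 1/m)) ^ m dt`, which is nonnegative for even `m`.
If some `cᵢ < 0`, the unit vector `eᵢ` gives `𝒞 eᵢ^m = 1 / (m cᵢ) < 0`.
The diagonal entries `1 / (m cᵢ)` are defined, so `m cᵢ ≠ 0` and the two cases are exhaustive.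
-/

open Finset intervalIntegral

section CauchyForm

variable {ι : Type*} [Fintype ι]

noncomputable def cauchyForm (m : ℕ) (c x : ι → ℝ) : ℝ :=
  ∑ i : Fin m → ι, (∏ j, x (i j)) / ∑ j, c (i j)

theorem cauchyForm_single [DecidableEq ι] (m : ℕ) (c : ι → ℝ) (i : ι) :
    cauchyForm m c (Pi.single i 1) = 1 / (m * c i) := by
  unfold cauchyForm
  rw [Fintype.sum_eq_single fun _ => i]
  · simp
  · intro f hf
    obtain ⟨j, hj⟩ : ∃ j, f j ≠ i := by
      by_contra! h
      exact hf (funext h)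
    rw [prod_eq_zero (mem_univ j) (Pi.single_eq_of_ne hj 1), zero_div]

theorem div_eq_integral_mul_rpow_sub_one (a : ℝ) {s : ℝ} (hs : 0 < s) :
    a / s = ∫ t in (0 : ℝ)..1, a * t ^ (s - 1) := by
  rw [integral_const_mul, integral_rpow (Or.inl (by linarith)), sub_add_cancel, Real.one_rpow,
    Real.zero_rpow hs.ne', sub_zero, div_eq_mul_one_div]

theorem sum_mul_rpow_pow {t : ℝ} (ht : 0 < t) (m : ℕ) (x a : ι → ℝ) :
    (∑ i, x i * t ^ a i) ^ m = ∑ f : Fin m → ι, (∏ j, x (f j)) * t ^ ∑ j, a (f j) := by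
  rw [Fintype.sum_pow]
  refine sum_congr rfl fun f _ => ?_
  rw [prod_mul_distrib, Real.rpow_sum_of_pos ht]

theorem cauchyForm_eq_integral {m : ℕ} (hm : m ≠ 0) {c : ι → ℝ} (hc : ∀ i, 0 < c i)
    (x : ι → ℝ) :
    cauchyForm m c x = ∫ t in (0 : ℝ)..1, (∑ i, x i * t ^ (c i - 1 / m)) ^ m := by
  have hsum_pos (f : Fin m → ι) : 0 < ∑ j, c (f j) :=
    have : Nonempty (Fin m) := ⟨⟨0, Nat.pos_of_ne_zero hm⟩⟩
    sum_pos (fun j _ => hc (f j)) univ_nonempty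
  have hexp (f : Fin m → ι) : ∑ j, (c (f j) - 1 / m) = ∑ j, c (f j) - 1 := by
    rw [sum_sub_distrib, sum_const, card_univ, Fintype.card_fin, nsmul_eq_mul,
      mul_one_div_cancel (Nat.cast_ne_zero.mpr hm)]
  calc cauchyForm m c x
      = ∑ f : Fin m → ι, ∫ t in (0 : ℝ)..1, (∏ j, x (f j)) * t ^ (∑ j, c (f j) - 1) :=
        sum_congr rfl fun f _ => div_eq_integral_mul_rpow_sub_one _ (hsum_pos f)
    _ = ∫ t in (0 : ℝ)..1, ∑ f : Fin m → ι, (∏ j, x (f j)) * t ^ (∑ j, c (f j) - 1) :=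
        (integral_finsetSum fun f _ =>
          (intervalIntegrable_rpow' (by linarith [hsum_pos f])).const_mul _).symm
    _ = ∫ t in (0 : ℝ)..1, (∑ i, x i * t ^ (c i - 1 / m)) ^ m := by
        refine integral_congr_ae (Filter.Eventually.of_forall fun t ht => ?_)
        rw [Set.uIoc_of_le zero_le_one] at ht
        simp only [sum_mul_rpow_pow ht.1, hexp]

theorem cauchyForm_nonneg {m : ℕ} (hm : Even m) {c : ι → ℝ} (hc : ∀ i, 0 < c i)
    (x : ι → ℝ) : 0 ≤ cauchyForm m c x := by
  rcases eq_or_ne m 0 with rfl | hm0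
  · simp [cauchyForm]
  rw [cauchyForm_eq_integral hm0 hc]
  exact integral_nonneg zero_le_one fun t _ => hm.pow_nonneg _

end CauchyForm

theorem cauchy_tensor_not_psd_iff_exists_neg_entry_general
    (m n : ℕ) (hme : Even m) (c : Fin n → ℝ)
    (hc : ∀ i : Fin m → Fin n, (∑ j, c (i j)) ≠ 0) :
    (¬ ∀ x : Fin n → ℝ,
        0 ≤ ∑ i : Fin m → Fin n, (∏ j, x (i j)) / (∑ j, c (i j))) ↔
      (∃ i, c i < 0) := by
  have hmc (i : Fin n) : (m : ℝ) * c i ≠ 0 := by simpa using hc fun _ => i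
  change (¬ ∀ x, 0 ≤ cauchyForm m c x) ↔ _
  constructor
  · intro hnot
    by_contra! hc_nonneg
    exact hnot <| cauchyForm_nonneg hme fun i =>
      (hc_nonneg i).lt_of_ne' (right_ne_zero_of_mul (hmc i))
  · rintro ⟨i, hi⟩ hpsd
    have hm : (0 : ℝ) < m := (Nat.cast_nonneg m).lt_of_ne' (left_ne_zero_of_mul (hmc i))
    have hsingle := hpsd (Pi.single i 1)
    rw [cauchyForm_single] at hsingle
    exact hsingle.not_gt (one_div_neg.mpr (mul_neg_of_pos_of_neg hm hi))

/-- An even order symmetric Cauchy tensor is not positive semi-definite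
iff its generating vector has at least one negative entry. -/
theorem cauchy_tensor_not_psd_iff_exists_neg_entry
    (m n : ℕ) (hm : 0 < m) (hme : Even m) (c : Fin n → ℝ)
    (hc : ∀ i : Fin m → Fin n, (∑ j, c (i j)) ≠ 0) :
    (¬ ∀ x : Fin n → ℝ,
        0 ≤ ∑ i : Fin m → Fin n, (∏ j, x (i j)) / (∑ j, c (i j))) ↔
      (∃ i, c i < 0) :=
  cauchy_tensor_not_psd_iff_exists_neg_entry_general m n hme c hc
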